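/- arXiv:math-ph/0202032 — 5 statements merged into one kernel-verified Lean document; each statement's English description precedes it below -/
import Mathlib

section
/- Let x be a positive bounded operator on a Hilbert space H that is locally invertible, i.e. there exists ε > 0 with x ≥ ε·s(x) where s(x) is the support projection of x. If y is an invertible bounded operator on H, then y*xy is also locally invertible: there exists δ > 0 with y*xy ≥ δ·s(y*xy). -/
open ContinuousLinearMap

variable {H : Type*} [NormedAddCommGroup H] [InnerProductSpace ℂ H] [CompleteSpace H]

/-- The support projection of a bounded operator: the orthogonal projection onto the
closure of its range. -/
noncomputable def suppProj (x : H →L[ℂ] H) : H →L[ℂ] H :=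
  haveI : CompleteSpace ((LinearMap.range (x : H →ₗ[ℂ] H)).topologicalClosure : Submodule ℂ H) :=
    (LinearMap.range (x : H →ₗ[ℂ] H)).isClosed_topologicalClosure.completeSpace_coe
  (LinearMap.range (x : H →ₗ[ℂ] H)).topologicalClosure.subtypeL ∘L
    Submodule.orthogonalProjectionOnto (LinearMap.range (x : H →ₗ[ℂ] H)).topologicalClosure

/-! Write `P = s(x)` and `Q = s(y⋆ x y)`. Local invertibility of `x` says
`ε ‖P w‖² ≤ Re ⟪x w, w⟫`. Since `‖Q v‖² = ⟪Q v, v⟫`, the norm `‖Q v‖` is controlled by pairing `v`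
with the vectors `y⋆ x y w`, which are dense in the range of `Q`; such a pairing equals
`⟪x y w, P (y v)⟫`, and `‖x y w‖ ≤ ‖y⁻¹‖ ‖y⋆ x y w‖`. This gives `‖Q v‖ ≤ ‖y⁻¹‖ ‖P (y v)‖`, hence
`δ ‖Q v‖² ≤ ε ‖P (y v)‖² ≤ Re ⟪x y v, y v⟫ = Re ⟪y⋆ x y v, v⟫` for `δ = ε / (‖y⁻¹‖² + 1)`. -/

open scoped InnerProductSpace
open RCLike (re)

namespace Submodule

variable {𝕜 E : Type*} [RCLike 𝕜] [NormedAddCommGroup E] [InnerProductSpace 𝕜 E]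

theorem inner_starProjection_self (K : Submodule 𝕜 E) [K.HasOrthogonalProjection] (v : E) :
    ⟪K.starProjection v, v⟫_𝕜 = (‖K.starProjection v‖ ^ 2 : ℝ) := by
  conv_lhs => rw [← K.starProjection_eq_self_iff.mpr (K.starProjection_apply_mem v)]
  rw [inner_starProjection_left_eq_right, inner_self_eq_norm_sq_to_K, RCLike.ofReal_pow]

theorem inner_starProjection_right_of_mem (K : Submodule 𝕜 E) [K.HasOrthogonalProjection]
    {u : E} (hu : u ∈ K) (v : E) : ⟪u, K.starProjection v⟫_𝕜 = ⟪u, v⟫_𝕜 := by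
  rw [← inner_starProjection_left_eq_right, starProjection_eq_self_iff.mpr hu]

theorem norm_starProjection_le_of_forall_mem (K : Submodule 𝕜 E) [K.HasOrthogonalProjection]
    {v : E} {c : ℝ} (hc : 0 ≤ c) (h : ∀ m ∈ K, ‖⟪m, v⟫_𝕜‖ ≤ c * ‖m‖) :
    ‖K.starProjection v‖ ≤ c := by
  have hsq : ‖K.starProjection v‖ ^ 2 ≤ c * ‖K.starProjection v‖ := by
    simpa [inner_starProjection_self] using h _ (K.starProjection_apply_mem v)
  nlinarith [norm_nonneg (K.starProjection v)]

theorem norm_starProjection_topologicalClosure_le (S : Submodule 𝕜 E)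
    [S.topologicalClosure.HasOrthogonalProjection] {v : E} {c : ℝ} (hc : 0 ≤ c)
    (h : ∀ m ∈ S, ‖⟪m, v⟫_𝕜‖ ≤ c * ‖m‖) : ‖S.topologicalClosure.starProjection v‖ ≤ c := by
  refine S.topologicalClosure.norm_starProjection_le_of_forall_mem hc fun m hm => ?_
  have hclosed : IsClosed {m : E | ‖⟪m, v⟫_𝕜‖ ≤ c * ‖m‖} :=
    isClosed_le (by fun_prop) (by fun_prop)
  exact closure_minimal h hclosed (S.topologicalClosure_coe ▸ hm)

end Submodule

namespace ContinuousLinearMap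

variable {E : Type*} [NormedAddCommGroup E] [InnerProductSpace ℂ E] [CompleteSpace E]

theorem isPositive_sub_smul_starProjection_iff (T : E →L[ℂ] E) (K : Submodule ℂ E)
    [K.HasOrthogonalProjection] (ε : ℝ) :
    (T - ε • K.starProjection).IsPositive ↔
      IsSelfAdjoint T ∧ ∀ v, ε * ‖K.starProjection v‖ ^ 2 ≤ re ⟪T v, v⟫_ℂ := by
  have hP : IsSelfAdjoint (ε • K.starProjection) :=
    .smul (.all ε) (isSelfAdjoint_starProjection K)
  have hre (v : E) : (T - ε • K.starProjection).reApplyInnerSelf v =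
      re ⟪T v, v⟫_ℂ - ε * ‖K.starProjection v‖ ^ 2 := by
    rw [reApplyInnerSelf_apply, sub_apply, smul_apply, inner_sub_left, map_sub,
      RCLike.real_smul_eq_coe_smul (K := ℂ), inner_smul_real_left, K.inner_starProjection_self,
      RCLike.smul_re, RCLike.ofReal_re]
  simp only [isPositive_def', hre, sub_nonneg]
  exact and_congr_left' ⟨fun h => by simpa using h.add hP, fun h => h.sub hP⟩

end ContinuousLinearMap

theorem IsUnit.exists_norm_le_mul_norm_adjoint_apply {𝕜 E : Type*} [RCLike 𝕜]
    [NormedAddCommGroup E] [InnerProductSpace 𝕜 E] [CompleteSpace E] {y : E →L[𝕜] E}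
    (hy : IsUnit y) : ∃ C, 0 ≤ C ∧ ∀ a, ‖a‖ ≤ C * ‖adjoint y a‖ := by
  obtain ⟨u, rfl⟩ := hy
  refine ⟨‖(↑u⁻¹ : E →L[𝕜] E)‖, norm_nonneg _, fun a => ?_⟩
  have ha : a = adjoint (↑u⁻¹ : E →L[𝕜] E) (adjoint (u : E →L[𝕜] E) a) := by
    rw [← comp_apply, ← adjoint_comp, ← mul_def, u.mul_inv, one_def, adjoint_id, id_apply]
  calc ‖a‖ = _ := congrArg norm ha
    _ ≤ _ := (le_opNorm _ _).trans_eq (by rw [adjoint.norm_map])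

theorem suppProj_eq_starProjection (x : H →L[ℂ] H) :
    suppProj x = (LinearMap.range (x : H →ₗ[ℂ] H)).topologicalClosure.starProjection :=
  rfl

theorem isPositive_sub_smul_suppProj_iff (T x : H →L[ℂ] H) (ε : ℝ) :
    (T - ε • suppProj x).IsPositive ↔
      IsSelfAdjoint T ∧ ∀ v, ε * ‖suppProj x v‖ ^ 2 ≤ re ⟪T v, v⟫_ℂ :=
  isPositive_sub_smul_starProjection_iff T _ ε

theorem norm_suppProj_adjoint_conj_le (x y : H →L[ℂ] H) {C : ℝ} (hC : 0 ≤ C)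
    (hy : ∀ a, ‖a‖ ≤ C * ‖adjoint y a‖) (v : H) :
    ‖suppProj (adjoint y ∘L x ∘L y) v‖ ≤ C * ‖suppProj x (y v)‖ := by
  rw [suppProj_eq_starProjection]
  refine Submodule.norm_starProjection_topologicalClosure_le _ (by positivity) ?_
  rintro _ ⟨w, rfl⟩
  have hxw : x (y w) ∈ (LinearMap.range (x : H →ₗ[ℂ] H)).topologicalClosure :=
    Submodule.le_topologicalClosure _ (LinearMap.mem_range_self _ _)
  calc ‖⟪adjoint y (x (y w)), v⟫_ℂ‖
      = ‖⟪x (y w), suppProj x (y v)⟫_ℂ‖ := by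
        rw [adjoint_inner_left, suppProj_eq_starProjection,
          Submodule.inner_starProjection_right_of_mem _ hxw]
    _ ≤ ‖x (y w)‖ * ‖suppProj x (y v)‖ := norm_inner_le_norm _ _
    _ ≤ C * ‖adjoint y (x (y w))‖ * ‖suppProj x (y v)‖ := by gcongr; exact hy _
    _ = C * ‖suppProj x (y v)‖ * ‖adjoint y (x (y w))‖ := by ring

theorem locally_invertible_conj_general (x y : H →L[ℂ] H)
    (hloc : ∃ ε : ℝ, 0 < ε ∧ (x - ε • suppProj x).IsPositive) (hy : IsUnit y) :
    ∃ δ : ℝ, 0 < δ ∧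
      (((ContinuousLinearMap.adjoint y) ∘L x ∘L y) -
        δ • suppProj ((ContinuousLinearMap.adjoint y) ∘L x ∘L y)).IsPositive := by
  obtain ⟨ε, hε, hpos⟩ := hloc
  obtain ⟨hx, hx_bound⟩ := (isPositive_sub_smul_suppProj_iff x x ε).mp hpos
  obtain ⟨C, hC, hy_below⟩ := hy.exists_norm_le_mul_norm_adjoint_apply
  refine ⟨ε / (C ^ 2 + 1), by positivity,
    (isPositive_sub_smul_suppProj_iff _ _ _).mpr ⟨hx.adjoint_conj y, fun v => ?_⟩⟩
  calc ε / (C ^ 2 + 1) * ‖suppProj (adjoint y ∘L x ∘L y) v‖ ^ 2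
      ≤ ε / (C ^ 2 + 1) * (C ^ 2 * ‖suppProj x (y v)‖ ^ 2) := by
        rw [← mul_pow]; gcongr; exact norm_suppProj_adjoint_conj_le x y hC hy_below v
    _ ≤ ε * ‖suppProj x (y v)‖ ^ 2 := by
        rw [div_mul_eq_mul_div, div_le_iff₀ (by positivity)]
        nlinarith [sq_nonneg C, sq_nonneg ‖suppProj x (y v)‖]
    _ ≤ re ⟪x (y v), y v⟫_ℂ := hx_bound _
    _ = re ⟪(adjoint y ∘L x ∘L y) v, v⟫_ℂ := by
        rw [comp_apply, comp_apply, adjoint_inner_left]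

/-- local invertibility (`x ≥ ε·s(x)` for some `ε > 0`) is stable under
conjugation by an invertible operator. -/
theorem locally_invertible_conj (x y : H →L[ℂ] H) (hx : x.IsPositive)
    (hloc : ∃ ε : ℝ, 0 < ε ∧ (x - ε • suppProj x).IsPositive) (hy : IsUnit y) :
    ∃ δ : ℝ, 0 < δ ∧
      (((ContinuousLinearMap.adjoint y) ∘L x ∘L y) -
        δ • suppProj ((ContinuousLinearMap.adjoint y) ∘L x ∘L y)).IsPositive :=
  locally_invertible_conj_general x y hloc hy
end

section
/- Let a, b be positive semidefinite n×n complex matrices satisfying aba = a and bab = b, and suppose a is nonzero. Let p, q be the orthogonal projections onto the ranges of a and b respectively. Then the support projection of pqp equals p and the support projection of qpq equals q. -/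
open Matrix ComplexOrder

private lemma key_range {m : ℕ} (a b p q : Matrix (Fin m) (Fin m) ℂ)
    (haba : a * b * a = a) (hbq : b * q = b)
    (hp1 : pᴴ = p) (hq1 : qᴴ = q) (hq2 : q * q = q)
    (hp3 : LinearMap.range p.mulVecLin = LinearMap.range a.mulVecLin) :
    LinearMap.range (p * q * p).mulVecLin = LinearMap.range p.mulVecLin := by
  have hker : LinearMap.ker (p * q * p).mulVecLin = LinearMap.ker p.mulVecLin := by
    ext x
    simp only [LinearMap.mem_ker, mulVecLin_apply]
    constructor
    · intro h
      have hpq : (q * p)ᴴ = p * q := by rw [conjTranspose_mul, hp1, hq1]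
      have hqp : (q * p) *ᵥ x = 0 := by
        apply (Matrix.conjTranspose_mul_self_mulVec_eq_zero (q * p) x).mp
        rw [hpq, mul_assoc, ← mul_assoc q q p, hq2]
        rwa [mul_assoc] at h
      -- p *ᵥ x is in the range of a
      have hmem : p *ᵥ x ∈ LinearMap.range a.mulVecLin := by
        rw [← hp3]; exact ⟨x, rfl⟩
      obtain ⟨y, hy⟩ := hmem
      rw [mulVecLin_apply] at hy
      have hq0 : q *ᵥ (p *ᵥ x) = 0 := by rw [mulVec_mulVec]; exact hqp
      have hb0 : b *ᵥ (p *ᵥ x) = 0 := by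
        conv_lhs => rw [← hbq]
        rw [← mulVec_mulVec, hq0, mulVec_zero]
      calc p *ᵥ x = a *ᵥ y := hy.symm
        _ = (a * b * a) *ᵥ y := by rw [haba]
        _ = a *ᵥ (b *ᵥ (a *ᵥ y)) := by simp [mulVec_mulVec, mul_assoc]
        _ = a *ᵥ (b *ᵥ (p *ᵥ x)) := by rw [hy]
        _ = 0 := by rw [hb0, mulVec_zero]
    · intro h
      rw [mul_assoc, ← mulVec_mulVec, ← mulVec_mulVec, h, mulVec_zero, mulVec_zero]
  have hle : LinearMap.range (p * q * p).mulVecLin ≤ LinearMap.range p.mulVecLin := by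
    rw [mul_assoc, mulVecLin_mul]
    exact LinearMap.range_comp_le_range _ _
  refine Submodule.eq_of_le_of_finrank_le hle ?_
  have h1 := LinearMap.finrank_range_add_finrank_ker (p * q * p).mulVecLin
  have h2 := LinearMap.finrank_range_add_finrank_ker p.mulVecLin
  rw [hker] at h1
  omega

/-- if `a, b ≥ 0` satisfy `aba = a`, `bab = b` and `a ≠ 0`, and `p, q`
are the orthogonal projections onto their column spaces, then `pqp` has support `p`
and `qpq` has support `q` (equality of column spaces). -/
theorem minimal_pair_of_pairs {m : ℕ} (a b p q : Matrix (Fin m) (Fin m) ℂ)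
    (ha : a.PosSemidef) (hb : b.PosSemidef)
    (haba : a * b * a = a) (hbab : b * a * b = b) (ha0 : a ≠ 0)
    (hp1 : pᴴ = p) (hp2 : p * p = p)
    (hp3 : LinearMap.range p.mulVecLin = LinearMap.range a.mulVecLin)
    (hq1 : qᴴ = q) (hq2 : q * q = q)
    (hq3 : LinearMap.range q.mulVecLin = LinearMap.range b.mulVecLin) :
    LinearMap.range (p * q * p).mulVecLin = LinearMap.range p.mulVecLin ∧
    LinearMap.range (q * p * q).mulVecLin = LinearMap.range q.mulVecLin := by
  -- first derive `p * a = a`, `a * p = a`, `q * b = b`, `b * q = b`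
  have fix : ∀ (r c : Matrix (Fin m) (Fin m) ℂ), r * r = r →
      LinearMap.range r.mulVecLin = LinearMap.range c.mulVecLin → r * c = c := by
    intro r c hr hrange
    have hv : ∀ x, (r * c) *ᵥ x = c *ᵥ x := by
      intro x
      have : c *ᵥ x ∈ LinearMap.range r.mulVecLin := by rw [hrange]; exact ⟨x, rfl⟩
      obtain ⟨y, hy⟩ := this
      rw [mulVecLin_apply] at hy
      rw [← mulVec_mulVec, ← hy, mulVec_mulVec, hr, hy]
    ext i j
    have := congrFun (hv (Pi.single j 1)) i
    simpa [mulVec_single] using this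
  have hpa : p * a = a := fix p a hp2 hp3
  have hqb : q * b = b := fix q b hq2 hq3
  have hap : a * p = a := by
    have := congrArg conjTranspose hpa
    rwa [conjTranspose_mul, hp1, ha.1.eq] at this
  have hbq : b * q = b := by
    have := congrArg conjTranspose hqb
    rwa [conjTranspose_mul, hq1, hb.1.eq] at this
  exact ⟨key_range a b p q haba hbq hp1 hq1 hq2 hp3,
    key_range b a q p hbab hap hq1 hp1 hp2 hq3⟩
end

section
/- Let a, b be positive semidefinite n×n complex matrices with aba = a, bab = b, a ≠ 0, and let p, q be the projections onto the ranges of a and b. Let a⁻¹ denote the Moore–Penrose pseudoinverse of a and |qp|⁻² the Moore–Penrose pseudoinverse of pqp. Then b = q·|qp|⁻²·a⁻¹·|qp|⁻²·q. -/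
open Matrix ComplexOrder

/-- The four Moore–Penrose conditions: `y` is the Moore–Penrose pseudoinverse of `x`. -/
def IsMoorePenrose {m : ℕ} (x y : Matrix (Fin m) (Fin m) ℂ) : Prop :=
  x * y * x = x ∧ y * x * y = y ∧ (x * y)ᴴ = x * y ∧ (y * x)ᴴ = y * x

section aux

variable {d : ℕ}

/-- If two matrices induce the same linear map, they are equal. -/
lemma mat_ext {x y : Matrix (Fin d) (Fin d) ℂ}
    (h : ∀ v, x *ᵥ v = y *ᵥ v) : x = y := by
  refine Matrix.toLin'.injective (LinearMap.ext fun v => ?_)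
  simp only [Matrix.toLin'_apply]
  exact h v

lemma range_mul_le (x y : Matrix (Fin d) (Fin d) ℂ) :
    LinearMap.range (x * y).mulVecLin ≤ LinearMap.range x.mulVecLin := by
  rw [Matrix.mulVecLin_mul]
  exact LinearMap.range_comp_le_range _ _

/-- If `r` fixes the range of `c` (in the sense `r * c = c`) and the range of `y`
is contained in that of `c`, then `r * y = y`. -/
lemma fix_of_range_le {r c y : Matrix (Fin d) (Fin d) ℂ} (hrc : r * c = c)
    (hle : LinearMap.range y.mulVecLin ≤ LinearMap.range c.mulVecLin) : r * y = y := by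
  apply mat_ext
  intro v
  obtain ⟨u, hu⟩ := hle (LinearMap.mem_range_self y.mulVecLin v)
  simp only [Matrix.mulVecLin_apply] at hu
  rw [← Matrix.mulVec_mulVec, ← hu]
  rw [Matrix.mulVec_mulVec, hrc]

/-- Two Hermitian idempotents with the same range are equal. -/
lemma proj_unique {r p : Matrix (Fin d) (Fin d) ℂ}
    (hr1 : rᴴ = r) (hr2 : r * r = r) (hp1 : pᴴ = p) (hp2 : p * p = p)
    (h : LinearMap.range r.mulVecLin = LinearMap.range p.mulVecLin) : r = p := by
  have h1 : p * r = r := fix_of_range_le hp2 (h.le.trans_eq' rfl)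
  have h2 : r * p = p := fix_of_range_le hr2 h.ge
  calc r = (p * r)ᴴ := by rw [h1, hr1]
    _ = r * p := by rw [Matrix.conjTranspose_mul, hr1, hp1]
    _ = p := h2

/-- Uniqueness of the Moore–Penrose pseudoinverse. -/
lemma mp_unique {x y z : Matrix (Fin d) (Fin d) ℂ}
    (hy : IsMoorePenrose x y) (hz : IsMoorePenrose x z) : y = z := by
  obtain ⟨hy1, hy2, hy3, hy4⟩ := hy
  obtain ⟨hz1, hz2, hz3, hz4⟩ := hz
  have h1 : x * y = x * z := by
    calc x * y = x * z * (x * y) := by rw [← mul_assoc, hz1]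
      _ = (x * z)ᴴ * (x * y)ᴴ := by rw [hz3, hy3]
      _ = (x * y * (x * z))ᴴ := (Matrix.conjTranspose_mul _ _).symm
      _ = (x * z)ᴴ := by rw [← mul_assoc, hy1]
      _ = x * z := hz3
  have h2 : y * x = z * x := by
    calc y * x = y * x * (z * x) := by rw [mul_assoc, ← mul_assoc x z x, hz1]
      _ = (y * x)ᴴ * (z * x)ᴴ := by rw [hy4, hz4]
      _ = (z * x * (y * x))ᴴ := (Matrix.conjTranspose_mul _ _).symm
      _ = (z * x)ᴴ := by rw [mul_assoc z x (y * x), ← mul_assoc x y x, hy1]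
      _ = z * x := hz4
  calc y = y * x * y := hy2.symm
    _ = y * (x * z) := by rw [mul_assoc, h1]
    _ = z * x * z := by rw [← mul_assoc, h2]
    _ = z := hz2

/-- The MP pseudoinverse of a Hermitian matrix is Hermitian. -/
lemma mp_herm {x y : Matrix (Fin d) (Fin d) ℂ} (hx : xᴴ = x)
    (hy : IsMoorePenrose x y) : yᴴ = y := by
  obtain ⟨h1, h2, h3, h4⟩ := hy
  refine mp_unique ⟨?_, ?_, ?_, ?_⟩ ⟨h1, h2, h3, h4⟩
  · have e := congrArg Matrix.conjTranspose h1
    simp only [Matrix.conjTranspose_mul, hx] at e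
    rw [mul_assoc]
    exact e
  · have e := congrArg Matrix.conjTranspose h2
    simp only [Matrix.conjTranspose_mul, hx] at e
    rw [mul_assoc]
    exact e
  · rw [Matrix.conjTranspose_mul, Matrix.conjTranspose_conjTranspose, hx, ← h4,
      Matrix.conjTranspose_mul, hx]
  · rw [Matrix.conjTranspose_mul, Matrix.conjTranspose_conjTranspose, hx, ← h3,
      Matrix.conjTranspose_mul, hx]

/-- Range of `A * Aᴴ` equals range of `A`. -/
lemma range_mul_conjTranspose_self (A : Matrix (Fin d) (Fin d) ℂ) :
    LinearMap.range (A * Aᴴ).mulVecLin = LinearMap.range A.mulVecLin := by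
  apply Submodule.eq_of_le_of_finrank_eq (range_mul_le A Aᴴ)
  have := Matrix.rank_self_mul_conjTranspose A
  simpa [Matrix.rank] using this

end aux

/-- with `a, b ≥ 0`, `aba = a`, `bab = b`, `a ≠ 0`, `p, q` the projections
onto the ranges of `a, b`, `ai` the Moore–Penrose pseudoinverse of `a`, and `m`
the Moore–Penrose pseudoinverse of `pqp = |qp|²`, one has `b = q·|qp|⁻²·a⁻¹·|qp|⁻²·q`. -/
theorem pairs_formula {d : ℕ} (a b p q ai m : Matrix (Fin d) (Fin d) ℂ)
    (ha : a.PosSemidef) (hb : b.PosSemidef)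
    (haba : a * b * a = a) (hbab : b * a * b = b) (ha0 : a ≠ 0)
    (hp1 : pᴴ = p) (hp2 : p * p = p)
    (hp3 : LinearMap.range p.mulVecLin = LinearMap.range a.mulVecLin)
    (hq1 : qᴴ = q) (hq2 : q * q = q)
    (hq3 : LinearMap.range q.mulVecLin = LinearMap.range b.mulVecLin)
    (hai : IsMoorePenrose a ai) (hm : IsMoorePenrose (p * q * p) m) :
    b = q * m * ai * m * q := by
  have haH : aᴴ = a := ha.1
  have hbH : bᴴ = b := hb.1
  obtain ⟨hai1, hai2, hai3, hai4⟩ := hai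
  obtain ⟨hm1, hm2, hm3, hm4⟩ := hm
  -- basic absorption identities
  have hpa : p * a = a := fix_of_range_le hp2 hp3.ge
  have hap : a * p = a := by
    have := congrArg Matrix.conjTranspose hpa
    simpa [Matrix.conjTranspose_mul, haH, hp1] using this
  have hqb : q * b = b := fix_of_range_le hq2 hq3.ge
  have hbq : b * q = b := by
    have := congrArg Matrix.conjTranspose hqb
    simpa [Matrix.conjTranspose_mul, hbH, hq1] using this
  have habp : a * b * p = p := fix_of_range_le haba hp3.le
  have hbaq : b * a * q = q := fix_of_range_le hbab hq3.le
  have hpba : p * (b * a) = p := by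
    have := congrArg Matrix.conjTranspose habp
    simpa [Matrix.conjTranspose_mul, haH, hbH, hp1, mul_assoc] using this
  have hqab : q * (a * b) = q := by
    have := congrArg Matrix.conjTranspose hbaq
    simpa [Matrix.conjTranspose_mul, haH, hbH, hq1, mul_assoc] using this
  -- range computations
  have hsH : (p * q * p)ᴴ = p * q * p := by
    simp [Matrix.conjTranspose_mul, hp1, hq1, mul_assoc]
  have hfac : p * q * p = (p * q) * (p * q)ᴴ := by
    rw [Matrix.conjTranspose_mul, hp1, hq1, show (p * q) * (q * p) = p * (q * q) * p by
      simp [mul_assoc], hq2]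
  have hrpq : LinearMap.range p.mulVecLin ≤ LinearMap.range (p * q).mulVecLin := by
    have hp_eq : (p * q) * (b * a) = p := by
      calc (p * q) * (b * a) = p * (q * b) * a := by simp [mul_assoc]
        _ = p * (b * a) := by rw [hqb, mul_assoc]
        _ = p := hpba
    calc LinearMap.range p.mulVecLin
        = LinearMap.range ((p * q) * (b * a)).mulVecLin := by rw [hp_eq]
      _ ≤ LinearMap.range (p * q).mulVecLin := range_mul_le _ _
  have hrs : LinearMap.range (p * q * p).mulVecLin = LinearMap.range p.mulVecLin := by
    apply le_antisymm
    · exact (range_mul_le p (q * p)).trans_eq' (by rw [mul_assoc])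
    · rw [hfac, range_mul_conjTranspose_self]
      exact hrpq
  -- (pqp) * m = p
  have hidem : (p * q * p) * m * ((p * q * p) * m) = (p * q * p) * m := by
    rw [show (p * q * p) * m * ((p * q * p) * m) = ((p * q * p) * m * (p * q * p)) * m by
      simp [mul_assoc], hm1]
  have hrsm : LinearMap.range ((p * q * p) * m).mulVecLin = LinearMap.range p.mulVecLin := by
    apply le_antisymm
    · exact (range_mul_le (p * q * p) m).trans hrs.le
    · refine hrs.ge.trans (le_trans ?_ (range_mul_le ((p * q * p) * m) (p * q * p)))
      rw [hm1]
  have hsm : (p * q * p) * m = p := proj_unique hm3 hidem hp1 hp2 hrsm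
  have hmH : mᴴ = m := mp_herm hsH ⟨hm1, hm2, hm3, hm4⟩
  have hms : m * (p * q * p) = p := by
    calc m * (p * q * p) = ((p * q * p) * m)ᴴ := by rw [Matrix.conjTranspose_mul, hmH, hsH]
      _ = p := by rw [hsm, hp1]
  have hmp : m * p = m := by
    rw [← hsm, ← mul_assoc]; exact hm2
  have hpm : p * m = m := by
    rw [← hms]; exact hm2
  have hpqm : p * q * m = p := by
    calc p * q * m = p * q * (p * m) := by rw [hpm]
      _ = (p * q * p) * m := by simp [mul_assoc]
      _ = p := hsm
  have hmqp : m * (q * p) = p := by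
    calc m * (q * p) = (m * p) * (q * p) := by rw [hmp]
      _ = m * (p * q * p) := by simp [mul_assoc]
      _ = p := hms
  -- ai facts
  have haai : a * ai = p := by
    apply proj_unique hai3 _ hp1 hp2
    · apply le_antisymm
      · exact (range_mul_le a ai).trans hp3.ge
      · refine hp3.le.trans (le_trans ?_ (range_mul_le (a * ai) a))
        rw [hai1]
    · calc a * ai * (a * ai) = (a * ai * a) * ai := by simp [mul_assoc]
        _ = a * ai := by rw [hai1]
  have haiH : aiᴴ = ai := mp_herm haH ⟨hai1, hai2, hai3, hai4⟩
  have haia : ai * a = p := by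
    calc ai * a = (a * ai)ᴴ := by rw [Matrix.conjTranspose_mul, haiH, haH]
      _ = p := by rw [haai, hp1]
  have haipbp : ai = p * b * p := by
    calc ai = ai * a * ai := hai2.symm
      _ = ai * (a * b * a) * ai := by rw [haba]
      _ = (ai * a) * b * (a * ai) := by simp [mul_assoc]
      _ = p * b * p := by rw [haia, haai]
  -- the candidate
  have hpep : p * (q * m * ai * m * q) * p = ai := by
    calc p * (q * m * ai * m * q) * p = (p * q * m) * ai * (m * (q * p)) := by
          simp [mul_assoc]
      _ = p * ai * p := by rw [hpqm, hmqp]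
      _ = (p * p) * b * (p * p) := by rw [haipbp]; simp [mul_assoc]
      _ = ai := by rw [hp2, haipbp]
  set x := b - q * m * ai * m * q with hxdef
  have hqxq : q * x * q = x := by
    have he : q * (q * m * ai * m * q) * q = q * m * ai * m * q := by
      calc q * (q * m * ai * m * q) * q = (q * q) * m * ai * m * (q * q) := by
            simp [mul_assoc]
        _ = q * m * ai * m * q := by rw [hq2]
    calc q * x * q = q * b * q - q * (q * m * ai * m * q) * q := by
          rw [hxdef]; noncomm_ring
      _ = x := by rw [he, hqb, hbq]
  have hpxp : p * x * p = 0 := by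
    have hb' : p * b * p = ai := haipbp.symm
    calc p * x * p = p * b * p - p * (q * m * ai * m * q) * p := by
          rw [hxdef]; noncomm_ring
      _ = 0 := by rw [hb', hpep, sub_self]
  have haxa : a * x * a = 0 := by
    calc a * x * a = (a * p) * x * (p * a) := by rw [hap, hpa]
      _ = a * (p * x * p) * a := by simp [mul_assoc]
      _ = 0 := by rw [hpxp, mul_zero, zero_mul]
  have hx0 : x = 0 := by
    calc x = q * x * q := hqxq.symm
      _ = (b * a * q) * x * (q * (a * b)) := by rw [hbaq, hqab]
      _ = b * a * (q * x * q) * (a * b) := by simp [mul_assoc]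
      _ = b * (a * x * a) * b := by rw [hqxq]; simp [mul_assoc]
      _ = 0 := by rw [haxa, mul_zero, zero_mul]
  have := sub_eq_zero.mp hx0
  exact this
end

section
/- Let {p, q} be orthogonal projections in Mₙ(ℂ) such that pqp has support p and qpq has support q (a minimal pair), and let |qp|⁻² denote the Moore–Penrose pseudoinverse of pqp. Then |qp|⁻² · q · |qp|⁻² = |qp|⁻², and consequently |qp|⁻² · q · |qp|⁻² ≥ p in the Loewner order. -/
open Matrix ComplexOrder

lemma eq_of_mulVec_eq {d : ℕ} {A B : Matrix (Fin d) (Fin d) ℂ}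
    (h : ∀ v, A.mulVec v = B.mulVec v) : A = B :=
  Matrix.toLin'.injective (LinearMap.ext fun v => by simpa using h v)

/-- for a minimal pair of projections `{p, q}` (i.e. `pqp` has support `p`
and `qpq` has support `q`) and `m` the Moore–Penrose pseudoinverse of `pqp = |qp|²`,
one has `|qp|⁻² q |qp|⁻² = |qp|⁻²` and consequently `|qp|⁻² q |qp|⁻² ≥ p`. -/
theorem pinv_sandwich {d : ℕ} (p q m : Matrix (Fin d) (Fin d) ℂ)
    (hp1 : pᴴ = p) (hp2 : p * p = p) (hq1 : qᴴ = q) (hq2 : q * q = q)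
    (hpqp : LinearMap.range (p * q * p).mulVecLin = LinearMap.range p.mulVecLin)
    (hqpq : LinearMap.range (q * p * q).mulVecLin = LinearMap.range q.mulVecLin)
    (hm : IsMoorePenrose (p * q * p) m) :
    m * q * m = m ∧ (m * q * m - p).PosSemidef := by
  obtain ⟨h1, h2, h3, h4⟩ := hm
  have hp2' : ∀ X : Matrix (Fin d) (Fin d) ℂ, p * (p * X) = p * X := fun X => by
    rw [← mul_assoc, hp2]
  have hq2' : ∀ X : Matrix (Fin d) (Fin d) ℂ, q * (q * X) = q * X := fun X => by
    rw [← mul_assoc, hq2]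
  have hxH : (p * q * p)ᴴ = p * q * p := by
    simp [conjTranspose_mul, hp1, hq1, mul_assoc]
  have hmem : ∀ v, ∃ w, (p * q * p).mulVec w = p.mulVec v := by
    intro v
    have hv : p.mulVec v ∈ LinearMap.range (p * q * p).mulVecLin := by
      rw [hpqp]; exact ⟨v, rfl⟩
    obtain ⟨w, hw⟩ := hv
    exact ⟨w, hw⟩
  have hpxm : p * (p * q * p * m) = p * q * p * m := by
    simp only [mul_assoc, hp2']
  have hxmp : p * q * p * m * p = p := by
    apply eq_of_mulVec_eq; intro v
    obtain ⟨w, hw⟩ := hmem v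
    rw [← mulVec_mulVec, ← hw, mulVec_mulVec, h1, hw]
  have hxm : p * q * p * m = p := by
    have h5 := congrArg conjTranspose hxmp
    rw [conjTranspose_mul, h3, hp1] at h5
    rw [← hpxm, h5]
  have hmhx : mᴴ * (p * q * p) = p := by
    have h6 := congrArg conjTranspose hxm
    rw [conjTranspose_mul, hxH, hp1] at h6
    exact h6
  -- e := m * (p*q*p)
  have hpe : p * (m * (p * q * p)) = m * (p * q * p) := by
    have h6 : m * (p * q * p) = (p * q * p) * mᴴ := by
      calc m * (p * q * p) = (m * (p * q * p))ᴴ := h4.symm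
        _ = (p * q * p)ᴴ * mᴴ := conjTranspose_mul _ _
        _ = (p * q * p) * mᴴ := by rw [hxH]
    rw [h6, ← mul_assoc, show p * (p * q * p) = p * q * p by simp only [mul_assoc, hp2']]
  have hep : (m * (p * q * p)) * p = m * (p * q * p) := by
    have h7 := congrArg conjTranspose hpe
    rw [conjTranspose_mul, h4, hp1] at h7
    exact h7
  have hmx : m * (p * q * p) = p := by
    have hsub : p - m * (p * q * p) = 0 := by
      set c := p - m * (p * q * p) with hc
      have hxc : (p * q * p) * c = 0 := by
        rw [hc, mul_sub, show (p * q * p) * p = p * q * p by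
              rw [mul_assoc, hp2],
            ← mul_assoc, h1, sub_self]
      have hcx : c * (p * q * p) = 0 := by
        have hcH : cᴴ = c := by rw [hc, conjTranspose_sub, hp1, h4]
        have := congrArg conjTranspose hxc
        rwa [conjTranspose_mul, hcH, hxH, conjTranspose_zero] at this
      have hcc : c * c = c := by
        rw [hc]
        simp only [sub_mul, mul_sub, hp2, hpe, hep]
        rw [show m * (p * q * p) * (m * (p * q * p)) = m * (p * q * p) by
          rw [← mul_assoc (m * (p * q * p)) m (p * q * p), h2]]
        abel
      have hpc : p * c = c := by
        rw [hc, mul_sub, hp2, hpe]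
      apply eq_of_mulVec_eq; intro v
      obtain ⟨w, hw⟩ := hmem (c.mulVec v)
      have hcv : c.mulVec v = (p * q * p).mulVec w := by
        conv_lhs => rw [← hpc, ← mulVec_mulVec]
        rw [hw, mulVec_mulVec, hpc]
      rw [← hcc, ← mulVec_mulVec, hcv, mulVec_mulVec, hcx]
      simp
    have := sub_eq_zero.mp hsub
    exact this.symm
  have hmp : m * p = m := by
    rw [← hxm, ← mul_assoc m (p * q * p) m, h2]
  have hpm : p * m = m := by rw [← hmx]; exact h2
  have part1 : m * q * m = m := by
    calc m * q * m = (m * p) * q * (p * m) := by rw [hmp, hpm]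
      _ = m * (p * q * p) * m := by simp only [mul_assoc]
      _ = m := h2
  refine ⟨part1, ?_⟩
  rw [part1]
  have hxpsd : (p * q * p).PosSemidef := by
    have : p * q * p = (q * p)ᴴ * (q * p) := by
      rw [conjTranspose_mul, hp1, hq1]
      simp only [mul_assoc, hq2']
    rw [this]
    exact posSemidef_conjTranspose_mul_self _
  have hypsd : (p - p * q * p).PosSemidef := by
    have h8 : p - p * q * p = ((1 - q) * p)ᴴ * ((1 - q) * p) := by
      rw [conjTranspose_mul, conjTranspose_sub, conjTranspose_one, hq1, hp1]
      simp only [mul_sub, sub_mul, mul_one, one_mul, hq2]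
      simp only [mul_assoc, hp2', hq2']
      rw [hp2]
      abel
    rw [h8]
    exact posSemidef_conjTranspose_mul_self _
  have hkey : m - p = (m - p)ᴴ * (p * q * p) * (m - p) + (p - p * q * p) := by
    have e1 : (m - p)ᴴ = mᴴ - p := by rw [conjTranspose_sub, hp1]
    have ex1 : (mᴴ - p) * (p * q * p) = p - p * q * p := by
      rw [sub_mul, hmhx, show p * (p * q * p) = p * q * p by simp only [mul_assoc, hp2']]
    rw [e1, ex1, mul_sub, sub_mul, sub_mul, hpm, hp2, hxm,
        show p * q * p * p = p * q * p by rw [mul_assoc, hp2]]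
    abel
  rw [hkey]
  exact (hxpsd.conjTranspose_mul_mul_same (m - p)).add hypsd
end

section
/- Let a, b be positive semidefinite n×n matrices with aba = a and bab = b, a ≠ 0, and let p, q be the projections onto their ranges. If qp = v|qp| is the polar decomposition of qp, then v*v = p and vv* = q; in particular p and q are Murray–von Neumann equivalent (have equal rank). -/
/-
Because `a` and `b` are generalized inverses of each other, `p = a b q p` and `q = b a p q`; the
first shows `ker (q p) = ker p`, the second (after taking adjoints) `ran (q p) = ran q`. The first
gives `ran |q p| = ran p`, so the initial projection `vᴴ v` is `p`; then `v` maps `ran p` onto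
`ran (q p) = ran q`, so the final projection `v vᴴ` is `q`.
-/

open Matrix ComplexOrder

variable {n : Type*} [Fintype n] [DecidableEq n]

/-- The modulus `|x| = (xᴴ x)^{1/2}` of a square complex matrix. -/
noncomputable def matAbs (x : Matrix n n ℂ) : Matrix n n ℂ :=
  (Matrix.posSemidef_conjTranspose_mul_self x).1.eigenvectorUnitary.1 *
    diagonal ((↑) ∘ (√·) ∘ (Matrix.posSemidef_conjTranspose_mul_self x).1.eigenvalues) *
    (star (Matrix.posSemidef_conjTranspose_mul_self x).1.eigenvectorUnitary : Matrix n n ℂ)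

namespace Matrix

section CommSemiring

variable {R : Type*} [CommSemiring R] {l m o : Type*} [Fintype m] [Fintype o]

theorem range_mulVecLin_mul_le (A : Matrix l m R) (B : Matrix m o R) :
    LinearMap.range (A * B).mulVecLin ≤ LinearMap.range A.mulVecLin := by
  rw [mulVecLin_mul]
  exact LinearMap.range_comp_le_range _ _

theorem ker_mulVecLin_le_mul (A : Matrix l m R) (B : Matrix m o R) :
    LinearMap.ker B.mulVecLin ≤ LinearMap.ker (A * B).mulVecLin := by
  rw [mulVecLin_mul]
  exact LinearMap.ker_le_ker_comp _ _

theorem range_mulVecLin_mul_mono (A : Matrix l m R) {B C : Matrix m o R}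
    (h : LinearMap.range B.mulVecLin ≤ LinearMap.range C.mulVecLin) :
    LinearMap.range (A * B).mulVecLin ≤ LinearMap.range (A * C).mulVecLin := by
  rw [mulVecLin_mul, mulVecLin_mul, LinearMap.range_comp, LinearMap.range_comp]
  exact Submodule.map_mono h

theorem mul_eq_of_range_le [Fintype l] {e : Matrix m m R} {a : Matrix m o R} {c : Matrix m l R}
    (he : e * a = a) (hc : LinearMap.range c.mulVecLin ≤ LinearMap.range a.mulVecLin) :
    e * c = c := by
  refine ext_iff_mulVec.mpr fun x => ?_
  obtain ⟨y, hy⟩ := hc ⟨x, rfl⟩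
  simp only [mulVecLin_apply] at hy
  rw [← mulVec_mulVec, ← hy, mulVec_mulVec, he]

theorem eq_mul_mul_mul_of_range_le [Fintype l] {a : Matrix l m R} {b : Matrix m l R}
    {q : Matrix l l R} {p : Matrix l o R} (haba : a * b * a = a) (hbq : b * q = b)
    (hp : LinearMap.range p.mulVecLin ≤ LinearMap.range a.mulVecLin) :
    p = a * b * q * p := by
  rw [Matrix.mul_assoc a b q, hbq]
  exact (mul_eq_of_range_le haba hp).symm

end CommSemiring

theorem range_mulVecLin_eq_of_ker_eq_of_le {K : Type*} [Field K] {m o : Type*} [Fintype o]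
    {A B : Matrix m o K}
    (hker : LinearMap.ker A.mulVecLin = LinearMap.ker B.mulVecLin)
    (hle : LinearMap.range A.mulVecLin ≤ LinearMap.range B.mulVecLin) :
    LinearMap.range A.mulVecLin = LinearMap.range B.mulVecLin := by
  refine Submodule.eq_of_le_of_finrank_eq hle ?_
  have hA := LinearMap.finrank_range_add_finrank_ker A.mulVecLin
  have hB := LinearMap.finrank_range_add_finrank_ker B.mulVecLin
  rw [hker] at hA
  omega

section StarProjection

variable {R : Type*} [CommSemiring R] [StarRing R] {m : Type*} [Fintype m]

theorem eq_of_isStarProjection_of_range_mulVecLin_eq {p q : Matrix m m R}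
    (hp : IsStarProjection p) (hq : IsStarProjection q)
    (h : LinearMap.range p.mulVecLin = LinearMap.range q.mulVecLin) : p = q := by
  have hp' : pᴴ = p := hp.isSelfAdjoint
  have hq' : qᴴ = q := hq.isSelfAdjoint
  calc p = q * p := (mul_eq_of_range_le hq.isIdempotentElem.eq h.le).symm
    _ = (p * q)ᴴ := by rw [conjTranspose_mul, hp', hq']
    _ = q := by rw [mul_eq_of_range_le hp.isIdempotentElem.eq h.ge, hq']

theorem mul_eq_of_isStarProjection_of_range_le {b q : Matrix m m R} (hb : b.IsHermitian)
    (hq : IsStarProjection q) (h : LinearMap.range b.mulVecLin ≤ LinearMap.range q.mulVecLin) :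
    b * q = b := by
  have hq' : qᴴ = q := hq.isSelfAdjoint
  simpa [hq', hb.eq] using congrArg conjTranspose (mul_eq_of_range_le hq.isIdempotentElem.eq h)

variable {a b p q : Matrix m m R}

theorem ker_mulVecLin_mul_eq_of_mul_mul_eq_self (hb : b.IsHermitian) (hq : IsStarProjection q)
    (hbq : LinearMap.range b.mulVecLin ≤ LinearMap.range q.mulVecLin) (haba : a * b * a = a)
    (hpa : LinearMap.range p.mulVecLin ≤ LinearMap.range a.mulVecLin) :
    LinearMap.ker (q * p).mulVecLin = LinearMap.ker p.mulVecLin := by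
  have hp_eq : p = a * b * q * p :=
    eq_mul_mul_mul_of_range_le haba (mul_eq_of_isStarProjection_of_range_le hb hq hbq) hpa
  refine le_antisymm ?_ (ker_mulVecLin_le_mul q p)
  calc LinearMap.ker (q * p).mulVecLin ≤ LinearMap.ker (a * b * (q * p)).mulVecLin :=
        ker_mulVecLin_le_mul _ _
    _ = LinearMap.ker p.mulVecLin := by rw [← Matrix.mul_assoc, ← hp_eq]

theorem range_mulVecLin_mul_eq_of_mul_mul_eq_self (ha : a.IsHermitian) (hb : b.IsHermitian)
    (hp : IsStarProjection p) (hq : q.IsHermitian)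
    (hap : LinearMap.range a.mulVecLin ≤ LinearMap.range p.mulVecLin) (hbab : b * a * b = b)
    (hqb : LinearMap.range q.mulVecLin ≤ LinearMap.range b.mulVecLin) :
    LinearMap.range (q * p).mulVecLin = LinearMap.range q.mulVecLin := by
  have hp' : pᴴ = p := hp.isSelfAdjoint
  have hq_eq : q = q * p * (a * b) := by
    conv_lhs => rw [← hq.eq, eq_mul_mul_mul_of_range_le hbab
      (mul_eq_of_isStarProjection_of_range_le ha hp hap) hqb]
    simp only [conjTranspose_mul, hp', hq.eq, ha.eq, hb.eq, Matrix.mul_assoc]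
  refine le_antisymm (range_mulVecLin_mul_le q p) ?_
  calc LinearMap.range q.mulVecLin = LinearMap.range (q * p * (a * b)).mulVecLin := by
        rw [← hq_eq]
    _ ≤ _ := range_mulVecLin_mul_le _ _

end StarProjection

section PartialIsometry

variable {R : Type*} [Field R] [PartialOrder R] [StarRing R] [StarOrderedRing R]
  {m o : Type*} [Fintype m] [Fintype o] {v : Matrix m o R}

theorem mul_conjTranspose_mul_self_of_isIdempotentElem (h : IsIdempotentElem (vᴴ * v)) :
    v * (vᴴ * v) = v := by
  have hzero : (v * (vᴴ * v) - v)ᴴ * (v * (vᴴ * v) - v) = 0 := by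
    rw [conjTranspose_sub, conjTranspose_mul, (isHermitian_conjTranspose_mul_self v).eq]
    simp only [Matrix.sub_mul, Matrix.mul_sub, Matrix.mul_assoc]
    simp only [← Matrix.mul_assoc vᴴ v, h.eq, sub_self]
  rwa [conjTranspose_mul_self_eq_zero, sub_eq_zero] at hzero

theorem isStarProjection_mul_conjTranspose_self (h : IsIdempotentElem (vᴴ * v)) :
    IsStarProjection (v * vᴴ) where
  isIdempotentElem := by
    rw [IsIdempotentElem, Matrix.mul_assoc, ← Matrix.mul_assoc vᴴ,
      ← Matrix.mul_assoc, mul_conjTranspose_mul_self_of_isIdempotentElem h]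
  isSelfAdjoint := (isHermitian_mul_conjTranspose_self v).isSelfAdjoint

theorem range_mulVecLin_mul_conjTranspose_self (h : IsIdempotentElem (vᴴ * v)) :
    LinearMap.range (v * vᴴ).mulVecLin = LinearMap.range v.mulVecLin := by
  refine le_antisymm (range_mulVecLin_mul_le _ _) ?_
  conv_lhs => rw [← mul_conjTranspose_mul_self_of_isIdempotentElem h, ← Matrix.mul_assoc]
  exact range_mulVecLin_mul_le _ _

end PartialIsometry

end Matrix

theorem matAbs_eq_cfc (x : Matrix n n ℂ) : matAbs x = cfc Real.sqrt (xᴴ * x) := by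
  rw [(posSemidef_conjTranspose_mul_self x).isHermitian.cfc_eq]
  rfl

theorem isHermitian_matAbs (x : Matrix n n ℂ) : (matAbs x).IsHermitian := by
  rw [matAbs_eq_cfc]
  exact cfc_predicate _ _

theorem matAbs_mul_self (x : Matrix n n ℂ) : matAbs x * matAbs x = xᴴ * x := by
  have hx := posSemidef_conjTranspose_mul_self x
  rw [matAbs_eq_cfc, ← cfc_mul ..]
  conv_rhs => rw [← cfc_id ℝ (xᴴ * x) hx.isHermitian.isSelfAdjoint]
  refine cfc_congr fun t ht => Real.mul_self_sqrt ?_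
  obtain ⟨i, rfl⟩ := hx.isHermitian.spectrum_real_eq_range_eigenvalues ▸ ht
  exact hx.eigenvalues_nonneg i

theorem ker_mulVecLin_matAbs (x : Matrix n n ℂ) :
    LinearMap.ker (matAbs x).mulVecLin = LinearMap.ker x.mulVecLin := by
  rw [← ker_mulVecLin_conjTranspose_mul_self (matAbs x), (isHermitian_matAbs x).eq,
    matAbs_mul_self, ker_mulVecLin_conjTranspose_mul_self]

theorem range_mulVecLin_matAbs (x : Matrix n n ℂ) :
    LinearMap.range (matAbs x).mulVecLin = LinearMap.range (xᴴ * x).mulVecLin := by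
  refine (range_mulVecLin_eq_of_ker_eq_of_le ?_ ?_).symm
  · rw [ker_mulVecLin_conjTranspose_mul_self, ker_mulVecLin_matAbs]
  · rw [← matAbs_mul_self]
    exact range_mulVecLin_mul_le _ _

theorem range_mulVecLin_matAbs_of_ker_eq {x p : Matrix n n ℂ}
    (hker : LinearMap.ker x.mulVecLin = LinearMap.ker p.mulVecLin)
    (hrange : LinearMap.range xᴴ.mulVecLin ≤ LinearMap.range p.mulVecLin) :
    LinearMap.range (matAbs x).mulVecLin = LinearMap.range p.mulVecLin := by
  rw [range_mulVecLin_matAbs]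
  refine range_mulVecLin_eq_of_ker_eq_of_le ?_ ((range_mulVecLin_mul_le _ _).trans hrange)
  rw [ker_mulVecLin_conjTranspose_mul_self, hker]

theorem mul_conjTranspose_self_eq_of_eq_mul_matAbs {x v q : Matrix n n ℂ}
    (hpolar : x = v * matAbs x) (hv : IsIdempotentElem (vᴴ * v))
    (hinit : LinearMap.range (vᴴ * v).mulVecLin = LinearMap.range (matAbs x).mulVecLin)
    (hq : IsStarProjection q) (h : LinearMap.range q.mulVecLin = LinearMap.range x.mulVecLin) :
    v * vᴴ = q := by
  have hrange_v : LinearMap.range v.mulVecLin = LinearMap.range x.mulVecLin := by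
    refine le_antisymm ?_ (hpolar ▸ range_mulVecLin_mul_le _ _)
    calc LinearMap.range v.mulVecLin = LinearMap.range (v * (vᴴ * v)).mulVecLin := by
          rw [mul_conjTranspose_mul_self_of_isIdempotentElem hv]
      _ ≤ LinearMap.range (v * matAbs x).mulVecLin := range_mulVecLin_mul_mono v hinit.le
      _ = LinearMap.range x.mulVecLin := by rw [← hpolar]
  refine eq_of_isStarProjection_of_range_mulVecLin_eq (isStarProjection_mul_conjTranspose_self hv)
    hq ?_
  rw [range_mulVecLin_mul_conjTranspose_self hv, hrange_v, h]

theorem polar_partial_isometry_general {d : ℕ} (a b p q v : Matrix (Fin d) (Fin d) ℂ)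
    (ha : a.PosSemidef) (hb : b.PosSemidef)
    (haba : a * b * a = a) (hbab : b * a * b = b)
    (hp1 : pᴴ = p) (hp2 : p * p = p)
    (hp3 : LinearMap.range p.mulVecLin = LinearMap.range a.mulVecLin)
    (hq1 : qᴴ = q) (hq2 : q * q = q)
    (hq3 : LinearMap.range q.mulVecLin = LinearMap.range b.mulVecLin)
    (hpolar : q * p = v * matAbs (q * p))
    (hinit1 : (vᴴ * v) * (vᴴ * v) = vᴴ * v)
    (hinit3 : LinearMap.range (vᴴ * v).mulVecLin
      = LinearMap.range (matAbs (q * p)).mulVecLin) :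
    vᴴ * v = p ∧ v * vᴴ = q ∧ p.rank = q.rank := by
  have hp : IsStarProjection p := ⟨hp2, hp1⟩
  have hq : IsStarProjection q := ⟨hq2, hq1⟩
  have hker : LinearMap.ker (q * p).mulVecLin = LinearMap.ker p.mulVecLin :=
    ker_mulVecLin_mul_eq_of_mul_mul_eq_self hb.isHermitian hq hq3.ge haba hp3.le
  have hrange : LinearMap.range (q * p).mulVecLin = LinearMap.range q.mulVecLin :=
    range_mulVecLin_mul_eq_of_mul_mul_eq_self ha.isHermitian hb.isHermitian hp hq1 hp3.ge hbab
      hq3.le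
  have habs : LinearMap.range (matAbs (q * p)).mulVecLin = LinearMap.range p.mulVecLin := by
    refine range_mulVecLin_matAbs_of_ker_eq hker ?_
    rw [conjTranspose_mul, hp1, hq1]
    exact range_mulVecLin_mul_le p q
  have hvp : vᴴ * v = p := eq_of_isStarProjection_of_range_mulVecLin_eq
    ⟨hinit1, (isHermitian_conjTranspose_mul_self v).isSelfAdjoint⟩ hp (hinit3.trans habs)
  have hvq : v * vᴴ = q :=
    mul_conjTranspose_self_eq_of_eq_mul_matAbs hpolar hinit1 hinit3 hq hrange.symm
  refine ⟨hvp, hvq, ?_⟩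
  rw [← hvp, ← hvq, rank_conjTranspose_mul_self, rank_self_mul_conjTranspose]

/-- for `a, b ≥ 0` with `aba = a`, `bab = b`, `a ≠ 0`, projections `p, q`
onto their ranges and the polar decomposition `qp = v|qp|` (with `v` the partial
isometry whose initial projection `vᴴv` is the projection onto the range of `|qp|`),
one has `vᴴv = p` and `vvᴴ = q`; in particular `rank p = rank q`. -/
theorem polar_partial_isometry {d : ℕ} (a b p q v : Matrix (Fin d) (Fin d) ℂ)
    (ha : a.PosSemidef) (hb : b.PosSemidef)
    (haba : a * b * a = a) (hbab : b * a * b = b) (ha0 : a ≠ 0)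
    (hp1 : pᴴ = p) (hp2 : p * p = p)
    (hp3 : LinearMap.range p.mulVecLin = LinearMap.range a.mulVecLin)
    (hq1 : qᴴ = q) (hq2 : q * q = q)
    (hq3 : LinearMap.range q.mulVecLin = LinearMap.range b.mulVecLin)
    (hpolar : q * p = v * matAbs (q * p))
    (hinit1 : (vᴴ * v) * (vᴴ * v) = vᴴ * v) (hinit2 : (vᴴ * v)ᴴ = vᴴ * v)
    (hinit3 : LinearMap.range (vᴴ * v).mulVecLin
      = LinearMap.range (matAbs (q * p)).mulVecLin) :
    vᴴ * v = p ∧ v * vᴴ = q ∧ p.rank = q.rank :=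
  polar_partial_isometry_general a b p q v ha hb haba hbab hp1 hp2 hp3 hq1 hq2 hq3 hpolar hinit1
    hinit3
end
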